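/- arXiv:2007.01450 — 2 statements merged into one kernel-verified Lean document; each statement's English description precedes it below -/
import Mathlib

section
/- Let G be a simply connected semisimple algebraic group over an algebraically closed field of characteristic 0, written as G = G_1 × ⋯ × G_n with quasi-simple factors, and let L be a nonzero perfect submonoid of the dominant weights X*_+(T). For any dominant weight λ ∈ L there exists a dominant weight ω_λ ∈ L such that for every k with 1 ≤ k ≤ n, if π_k(λ) is nontrivial then ω_λ is k-regular. -/
/-!
An axiomatized combinatorial model of connected semisimple algebraic groups over an
algebraically closed field of characteristic zero, recorded through their root data
in fundamental-weight coordinates, together with the tensor-product decomposition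
data `X(λ,μ)` of their irreducible representations.
-/

/-- The root datum of a simply connected semisimple algebraic group
`G = G_1 × ⋯ × G_n` (product of quasi-simple factors) over an algebraically closed
field of characteristic zero, in fundamental-weight coordinates: the weight lattice
`X^*(T)` is identified with `I → ℤ` via `λ ↦ (⟨λ, α_i^∨⟩)_{i ∈ I}`, where `I` is the
index set of the simple roots and `I = ⊔_k I_k` with `I_k` the simple roots of the
quasi-simple factor `G_k`. -/
structure SCRootDatum where
  /-- the number of quasi-simple factors -/
  n : ℕ
  npos : 0 < n
  /-- the index set of the simple roots -/
  I : Type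
  [fintypeI : Fintype I]
  /-- `factor i = k` iff the simple root `α_i` belongs to the factor `G_k` -/
  factor : I → Fin n
  factor_surjective : Function.Surjective factor
  /-- the Cartan matrix, `cartan i j = ⟨α_i, α_j^∨⟩` -/
  cartan : I → I → ℤ
  cartan_diag : ∀ i, cartan i i = 2
  cartan_nonpos : ∀ i j, i ≠ j → cartan i j ≤ 0
  cartan_symm_zero : ∀ i j, cartan i j = 0 → cartan j i = 0
  /-- simple roots in distinct quasi-simple factors are orthogonal -/
  cartan_factor : ∀ i j, factor i ≠ factor j → cartan i j = 0
  /-- each factor is quasi-simple: its Dynkin diagram is connected -/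
  factor_connected : ∀ i j, factor i = factor j →
    Relation.ReflTransGen (fun a b => cartan a b ≠ 0) i j

attribute [instance] SCRootDatum.fintypeI

namespace SCRootDatum

variable (D : SCRootDatum)

/-- A weight of `T`, in fundamental-weight coordinates. -/
abbrev Weight : Type := D.I → ℤ

/-- `λ` is a dominant weight. -/
def IsDominant (lam : D.Weight) : Prop := ∀ i, 0 ≤ lam i

/-- The simple root `α_i`, in fundamental-weight coordinates. -/
def alpha (i : D.I) : D.Weight := fun j => D.cartan i j

/-- The root lattice `Q`. -/
def rootLattice : AddSubgroup D.Weight := AddSubgroup.closure (Set.range D.alpha)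

/-- The root lattice `Q_k` of the quasi-simple factor `G_k`. -/
def rootLatticeFactor (k : Fin D.n) : AddSubgroup D.Weight :=
  AddSubgroup.closure (D.alpha '' {i | D.factor i = k})

/-- The cone of nonnegative integral combinations of simple roots. -/
def posRootCone : AddSubmonoid D.Weight := AddSubmonoid.closure (Set.range D.alpha)

/-- The projection `π_k : X^*(T) → X^*(T_k)`, viewing `X^*(T_k)` as the set of
weights supported on the simple roots of the factor `G_k`. -/
def proj (k : Fin D.n) (lam : D.Weight) : D.Weight :=
  fun i => if D.factor i = k then lam i else 0

/-- The support of a dominant weight `λ`: `{i ∈ I ∣ ⟨λ, α_i^∨⟩ > 0}`. -/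
def supp (lam : D.Weight) : Set D.I := {i | 0 < lam i}

/-- `λ` is `k`-regular if its support contains `I_k`. -/
def IsRegular (k : Fin D.n) (lam : D.Weight) : Prop :=
  ∀ i, D.factor i = k → 0 < lam i

/-- The component support of a weight: the set of `k` with `π_k(λ) ≠ 0`. -/
def wsupport (lam : D.Weight) : Set (Fin D.n) := {k | D.proj k lam ≠ 0}

/-- The subgroup `X^*(T)_S` of weights supported on the factors belonging to `S`. -/
def factorWeights (S : Set (Fin D.n)) : AddSubgroup D.Weight where
  carrier := {lam | ∀ i, D.factor i ∉ S → lam i = 0}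
  zero_mem' := fun i _ => rfl
  add_mem' := by
    intro a b ha hb i hi
    simp only [Set.mem_setOf_eq] at ha hb
    simp only [Pi.add_apply, ha i hi, hb i hi, add_zero]
  neg_mem' := by
    intro a ha i hi
    simp only [Set.mem_setOf_eq] at ha
    simp only [Pi.neg_apply, ha i hi, neg_zero]

/-- The simple reflection `s_i λ = λ - ⟨λ, α_i^∨⟩ α_i`. -/
def reflFun (i : D.I) (lam : D.Weight) : D.Weight := lam - lam i • D.alpha i

lemma reflFun_involutive (i : D.I) : Function.Involutive (D.reflFun i) := by
  intro lam
  funext j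
  simp only [reflFun, alpha, Pi.sub_apply, Pi.smul_apply, smul_eq_mul]
  rw [D.cartan_diag i]
  ring

/-- The simple reflection `s_i`, as a permutation of the weight lattice. -/
def reflPerm (i : D.I) : Equiv.Perm D.Weight := (D.reflFun_involutive i).toPerm

/-- The Weyl group `W`, realized as the group of permutations of the weight lattice
generated by the simple reflections. -/
def weyl : Subgroup (Equiv.Perm D.Weight) := Subgroup.closure (Set.range D.reflPerm)

/-- The Weyl group `W_k` of the quasi-simple factor `G_k`. -/
def weylFactor (k : Fin D.n) : Subgroup (Equiv.Perm D.Weight) :=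
  Subgroup.closure (D.reflPerm '' {i | D.factor i = k})

/-- The set `Π(λ)` of weights of the irreducible representation `L(λ)` with highest
weight `λ`: for dominant `λ`, a weight `μ` lies in `Π(λ)` if and only if
`w μ ≼ λ` for every `w` in the Weyl group. -/
def weightsOf (lam : D.Weight) : Set D.Weight :=
  {mu | ∀ w ∈ D.weyl, lam - w mu ∈ D.posRootCone}

end SCRootDatum

/-- A simply connected semisimple algebraic group over an algebraically closed field
of characteristic zero, modelled by its root datum together with the tensor-product
decomposition data of its irreducible representations:
`tensor λ μ = X(λ,μ) = {ν ∣ L(ν) is a direct summand of L(λ) ⊗ L(μ)}`. -/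
structure SCGroupDatum extends SCRootDatum where
  tensor : (I → ℤ) → (I → ℤ) → Set (I → ℤ)
  /-- every member of `X(λ,μ)` is dominant -/
  tensor_isDominant : ∀ lam mu nu, nu ∈ tensor lam mu → toSCRootDatum.IsDominant nu
  /-- the Cartan component: `λ + μ ∈ X(λ, μ)` -/
  tensor_self : ∀ lam mu, toSCRootDatum.IsDominant lam → toSCRootDatum.IsDominant mu →
    lam + mu ∈ tensor lam mu
  /-- every `ν ∈ X(λ,μ)` satisfies `ν ≼ λ + μ` -/
  tensor_sub : ∀ lam mu nu, nu ∈ tensor lam mu →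
    lam + mu - nu ∈ toSCRootDatum.posRootCone
  /-- the PRV theorem: the dominant representative of `λ + wμ` lies in `X(λ,μ)` -/
  tensor_prv : ∀ lam mu, toSCRootDatum.IsDominant lam → toSCRootDatum.IsDominant mu →
    ∀ w ∈ toSCRootDatum.weyl, ∀ nu, toSCRootDatum.IsDominant nu →
      (∃ u ∈ toSCRootDatum.weyl, u (lam + w mu) = nu) → nu ∈ tensor lam mu

namespace SCGroupDatum

variable (D : SCGroupDatum)

/-- `L` is a perfect submonoid of the set of dominant weights: an additive submonoid
consisting of dominant weights such that `λ, μ ∈ L` implies `X(λ,μ) ⊆ L`. -/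
def IsPerfect (L : Set (D.I → ℤ)) : Prop :=
  (0 : D.I → ℤ) ∈ L ∧ (∀ a ∈ L, ∀ b ∈ L, a + b ∈ L) ∧
    (∀ a ∈ L, D.toSCRootDatum.IsDominant a) ∧
    ∀ a ∈ L, ∀ b ∈ L, D.tensor a b ⊆ L

/-- The component support of a submonoid of dominant weights:
the set of `k` with `π_k(L) ≠ {0}`. -/
def suppOf (L : Set (D.I → ℤ)) : Set (Fin D.n) :=
  {k | ∃ lam ∈ L, D.toSCRootDatum.proj k lam ≠ 0}

/-- `L` has full component support. -/
def FullSupport (L : Set (D.I → ℤ)) : Prop :=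
  ∀ k : Fin D.n, ∃ lam ∈ L, D.toSCRootDatum.proj k lam ≠ 0

end SCGroupDatum

namespace SCGroupDatum

variable (D : SCGroupDatum)

/-- Support growth step: if `ω ∈ L` and `ω_j > 0`, then there is `ω' ∈ L` whose
support contains that of `ω` together with all neighbors of `j`. -/
lemma step_lemma (L : Set (D.I → ℤ)) (hL : D.IsPerfect L)
    (om : D.I → ℤ) (hom : om ∈ L) (j : D.I) (hj : 0 < om j) :
    ∃ om' ∈ L, (∀ t, 0 < om t → 0 < om' t) ∧
      ∀ i, D.cartan j i ≠ 0 → 0 < om' i := by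
  obtain ⟨h0, hadd, hdom, htens⟩ := hL
  have hdomom := hdom om hom
  set mu : D.I → ℤ := om + D.toSCRootDatum.reflFun j om with hmu
  have hmueq : ∀ i, mu i = 2 * om i - om j * D.cartan j i := by
    intro i
    simp only [hmu, SCRootDatum.reflFun, SCRootDatum.alpha, Pi.add_apply,
      Pi.sub_apply, Pi.smul_apply, smul_eq_mul]
    ring
  have hmudom : D.toSCRootDatum.IsDominant mu := by
    intro i
    rw [hmueq]
    rcases eq_or_ne i j with rfl | hne
    · rw [D.cartan_diag]
      nlinarith [hdomom i]
    · have hc : D.cartan j i ≤ 0 := D.cartan_nonpos j i (Ne.symm hne)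
      have : 0 ≤ om j * (-(D.cartan j i)) := mul_nonneg (hdomom j) (by linarith)
      have := hdomom i
      nlinarith
  have hmumem : mu ∈ D.tensor om om := by
    apply D.tensor_prv om om hdomom hdomom (D.toSCRootDatum.reflPerm j)
      (Subgroup.subset_closure (Set.mem_range_self j)) mu hmudom
    exact ⟨1, one_mem _, rfl⟩
  have hmuL : mu ∈ L := htens om hom om hom hmumem
  refine ⟨om + mu, hadd om hom mu hmuL, ?_, ?_⟩
  · intro t ht
    have := hmudom t
    simp only [Pi.add_apply]
    linarith
  · intro i hci
    rcases eq_or_ne i j with rfl | hne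
    · have := hmudom i
      simp only [Pi.add_apply]
      linarith
    · have hc : D.cartan j i ≤ 0 := D.cartan_nonpos j i (Ne.symm hne)
      have hclt : D.cartan j i < 0 := lt_of_le_of_ne hc hci
      have h1 : 0 < om j * (-(D.cartan j i)) := mul_pos hj (by linarith)
      have h2 := hdomom i
      have h3 := hmueq i
      simp only [Pi.add_apply]
      nlinarith

/-- Propagation along a path in the Dynkin diagram. -/
lemma reach_lemma (L : Set (D.I → ℤ)) (hL : D.IsPerfect L) (j i : D.I)
    (hij : Relation.ReflTransGen (fun a b => D.cartan a b ≠ 0) j i) :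
    ∀ om ∈ L, 0 < om j → ∃ om' ∈ L, (∀ t, 0 < om t → 0 < om' t) ∧ 0 < om' i := by
  induction hij with
  | refl => exact fun om hom h => ⟨om, hom, fun t ht => ht, h⟩
  | @tail b c hb hbc ih =>
    intro om hom h
    obtain ⟨om1, hom1, hpres, hb1⟩ := ih om hom h
    obtain ⟨om2, hom2, hpres2, hc⟩ := D.step_lemma L hL om1 hom1 b hb1
    exact ⟨om2, hom2, fun t ht => hpres2 t (hpres t ht), hc c hbc⟩

lemma combine_lemma (L : Set (D.I → ℤ)) (hL : D.IsPerfect L)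
    (lam : D.I → ℤ) (hlam : lam ∈ L) (s : Finset D.I) :
    ∃ om ∈ L, (∀ t, 0 < lam t → 0 < om t) ∧
      ∀ i ∈ s, D.toSCRootDatum.proj (D.factor i) lam ≠ 0 → 0 < om i := by
  classical
  induction s using Finset.induction_on with
  | empty => exact ⟨lam, hlam, fun t ht => ht, fun i hi => absurd hi (by simp)⟩
  | @insert a s ha ih =>
    obtain ⟨om, hom, hpres, hs⟩ := ih
    by_cases hcond : D.toSCRootDatum.proj (D.factor a) lam ≠ 0
    · obtain ⟨j, hjne⟩ := Function.ne_iff.mp hcond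
      simp only [SCRootDatum.proj, Pi.zero_apply] at hjne
      have hfj : D.factor j = D.factor a := by
        by_contra h
        simp [h] at hjne
      have hlamj : 0 < lam j := by
        rw [if_pos hfj] at hjne
        exact lt_of_le_of_ne (hL.2.2.1 lam hlam j) (Ne.symm hjne)
      have homj : 0 < om j := hpres j hlamj
      obtain ⟨om', hom', hpres', ha'⟩ :=
        D.reach_lemma L hL j a (D.factor_connected j a hfj) om hom homj
      refine ⟨om', hom', fun t ht => hpres' t (hpres t ht), ?_⟩
      intro i hi hci
      rcases Finset.mem_insert.mp hi with rfl | hi'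
      · exact ha'
      · exact hpres' i (hs i hi' hci)
    · refine ⟨om, hom, hpres, ?_⟩
      intro i hi hci
      rcases Finset.mem_insert.mp hi with rfl | hi'
      · exact absurd hci hcond
      · exact hs i hi' hci

end SCGroupDatum
/-- **Lemma 3.3.**  Let `G = G_1 × ⋯ × G_n` be a simply connected semisimple
algebraic group over an algebraically closed field of characteristic `0`, and let
`L` be a nonzero perfect submonoid of the dominant weights `X^*_+(T)`.  For any
dominant weight `λ ∈ L` there exists a dominant weight `ω_λ ∈ L` such that for
every `k`, if `π_k(λ)` is nontrivial then `ω_λ` is `k`-regular. -/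
theorem statement3 (D : SCGroupDatum) (L : Set (D.I → ℤ))
    (hL : D.IsPerfect L) (hL0 : ∃ x ∈ L, x ≠ 0)
    (lam : D.I → ℤ) (hlam : lam ∈ L) :
    ∃ om ∈ L, D.toSCRootDatum.IsDominant om ∧
      ∀ k : Fin D.n, D.toSCRootDatum.proj k lam ≠ 0 →
        D.toSCRootDatum.IsRegular k om := by
  obtain ⟨om, hom, hpres, hreg⟩ := D.combine_lemma L hL lam hlam Finset.univ
  refine ⟨om, hom, hL.2.2.1 om hom, ?_⟩
  intro k hk i hik
  exact hreg i (Finset.mem_univ i) (by rw [hik]; exact hk)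
end

section
/- Let G be a simply connected quasi-simple algebraic group over an algebraically closed field of characteristic 0, with simple roots {α_i}_{i∈I} and simple reflections {s_i}. Let λ be a dominant weight with supp(λ) ⊊ I, and choose j ∈ supp(λ) and i_1 ∉ supp(λ) that are adjacent in the Dynkin diagram. Then μ = 2λ + s_j(λ) is a dominant weight with supp(μ) ⊋ supp(λ); in particular, if λ lies in a perfect submonoid L of X*_+(T), then μ ∈ X(2λ, λ) ⊆ L. -/
/-- **(From the proof of Lemma 3.3.)**  Let `G` be a simply connected quasi-simple
algebraic group over an algebraically closed field of characteristic `0`, with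
simple roots `{α_i}_{i ∈ I}` and simple reflections `{s_i}`.  Let `λ` be a dominant
weight with `supp(λ) ⊊ I`, and choose `j ∈ supp(λ)` and `i₁ ∉ supp(λ)` that are
adjacent in the Dynkin diagram (`⟨α_j, α_{i₁}^∨⟩ < 0`).  Then `μ = 2λ + s_j(λ)` is
a dominant weight with `supp(μ) ⊋ supp(λ)`; in particular, if `λ` lies in a perfect
submonoid `L` of `X^*_+(T)`, then `μ ∈ X(2λ, λ) ⊆ L`. -/
theorem statement19 (D : SCGroupDatum) (hqs : D.n = 1)
    (lam : D.I → ℤ) (hlam : D.toSCRootDatum.IsDominant lam)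
    (hproper : D.toSCRootDatum.supp lam ⊂ (Set.univ : Set D.I))
    (j i1 : D.I) (hj : j ∈ D.toSCRootDatum.supp lam)
    (hi1 : i1 ∉ D.toSCRootDatum.supp lam)
    (hadj : D.cartan j i1 < 0) :
    D.toSCRootDatum.IsDominant (2 • lam + D.toSCRootDatum.reflFun j lam) ∧
    D.toSCRootDatum.supp lam ⊂
      D.toSCRootDatum.supp (2 • lam + D.toSCRootDatum.reflFun j lam) ∧
    ∀ L : Set (D.I → ℤ), D.IsPerfect L → lam ∈ L →
      2 • lam + D.toSCRootDatum.reflFun j lam ∈ D.tensor (2 • lam) lam ∧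
      D.tensor (2 • lam) lam ⊆ L := by
  have hmu : ∀ i, (2 • lam + D.toSCRootDatum.reflFun j lam) i = 3 * lam i - lam j * D.cartan j i := by
    intro i
    simp only [SCRootDatum.reflFun, SCRootDatum.alpha, Pi.add_apply, Pi.sub_apply,
      Pi.smul_apply, smul_eq_mul]
    ring
  have hlamj : 0 < lam j := hj
  have hdom : D.toSCRootDatum.IsDominant (2 • lam + D.toSCRootDatum.reflFun j lam) := by
    intro i
    rw [hmu]
    rcases eq_or_ne i j with rfl | hne
    · rw [D.cartan_diag]; linarith
    · have h1 := D.cartan_nonpos j i (Ne.symm hne)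
      have h2 := hlam i
      nlinarith
  have hge : ∀ i, lam i ≤ (2 • lam + D.toSCRootDatum.reflFun j lam) i := by
    intro i
    rw [hmu]
    rcases eq_or_ne i j with rfl | hne
    · rw [D.cartan_diag]; linarith
    · have h1 := D.cartan_nonpos j i (Ne.symm hne)
      have h2 := hlam i
      nlinarith
  have hsupp : D.toSCRootDatum.supp lam ⊂ D.toSCRootDatum.supp (2 • lam + D.toSCRootDatum.reflFun j lam) := by
    constructor
    · intro i hi
      exact lt_of_lt_of_le hi (hge i)
    · intro hsub
      apply hi1
      have hlam1 : lam i1 = 0 := le_antisymm (not_lt.mp hi1) (hlam i1)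
      have : i1 ∈ D.toSCRootDatum.supp (2 • lam + D.toSCRootDatum.reflFun j lam) := by
        simp only [SCRootDatum.supp, Set.mem_setOf_eq]
        rw [hmu, hlam1]
        nlinarith
      exact hsub this
  refine ⟨hdom, hsupp, ?_⟩
  intro L hL hlamL
  have hdom2 : D.toSCRootDatum.IsDominant (2 • lam) := by
    intro i; simp only [Pi.smul_apply]; exact nsmul_nonneg (hlam i) 2
  have hrefl : D.toSCRootDatum.reflPerm j ∈ D.toSCRootDatum.weyl :=
    Subgroup.subset_closure (Set.mem_range_self j)
  have hmem : 2 • lam + D.toSCRootDatum.reflFun j lam ∈ D.tensor (2 • lam) lam := by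
    apply D.tensor_prv (2 • lam) lam hdom2 hlam (D.toSCRootDatum.reflPerm j) hrefl _ hdom
    exact ⟨1, one_mem _, rfl⟩
  refine ⟨hmem, ?_⟩
  have h2lam : (2 : ℕ) • lam ∈ L := by
    have := hL.2.1 lam hlamL lam hlamL
    have h : (2 : ℕ) • lam = lam + lam := two_nsmul lam
    rwa [h]
  exact hL.2.2.2 _ h2lam _ hlamL
end
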